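/- Let x, q ∈ ℝ^d with ‖q‖ = 1, let M > 0, 0 < U < 1 satisfy ‖Ux/M‖ < 1, and m ∈ ℕ. Define P(x) = (Ux/M, ‖Ux/M‖², ‖Ux/M‖⁴, …, ‖Ux/M‖^{2^m}) ∈ ℝ^{d+m} and Q(q) = (q, 1/2, 1/2, …, 1/2) ∈ ℝ^{d+m}. Then ‖P(x) - Q(q)‖² = 1 + m/4 - 2(U/M)⟨q, x⟩ + ‖Ux/M‖^{2^{m+1}}. -/

import Mathlib

open Real RealInnerProductSpace

noncomputable def l2alshP {d : ℕ} (m : ℕ) (U M : ℝ) (x : EuclideanSpace ℝ (Fin d)) :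
    EuclideanSpace ℝ (Fin (d + m)) :=
  (EuclideanSpace.equiv (Fin (d + m)) ℝ).symm
    (Fin.append (EuclideanSpace.equiv (Fin d) ℝ ((U / M) • x))
      (fun j : Fin m => ‖(U / M) • x‖ ^ (2 ^ (j.val + 1))))

noncomputable def l2alshQ {d : ℕ} (m : ℕ) (q : EuclideanSpace ℝ (Fin d)) :
    EuclideanSpace ℝ (Fin (d + m)) :=
  (EuclideanSpace.equiv (Fin (d + m)) ℝ).symm
    (Fin.append (EuclideanSpace.equiv (Fin d) ℝ q) (fun _ : Fin m => (1 / 2 : ℝ)))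

/-!
The squared distance splits over the two blocks of coordinates. The first block gives
`‖Ux/M - q‖²`; in the second, with `s j = ‖Ux/M‖ ^ 2 ^ j`, each term is
`(s (j+1) - 1/2)² = s (j+2) - s (j+1) + 1/4` because squaring doubles the exponent, so the sum
telescopes.
-/

theorem Fin.append_sub_append {α : Type*} [Sub α] {d m : ℕ} (u u' : Fin d → α) (v v' : Fin m → α) :
    Fin.append u v - Fin.append u' v' = Fin.append (u - u') (v - v') := by
  ext i
  refine Fin.addCases (fun i => ?_) (fun j => ?_) i <;> simp

namespace EuclideanSpace

variable {𝕜 : Type*} [RCLike 𝕜] {d m : ℕ}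

theorem norm_sq_equiv_symm_append (u : Fin d → 𝕜) (v : Fin m → 𝕜) :
    ‖(EuclideanSpace.equiv (Fin (d + m)) 𝕜).symm (Fin.append u v)‖ ^ 2 =
      ‖(EuclideanSpace.equiv (Fin d) 𝕜).symm u‖ ^ 2 +
        ‖(EuclideanSpace.equiv (Fin m) 𝕜).symm v‖ ^ 2 := by
  simp [norm_sq_eq, Fin.sum_univ_add]

end EuclideanSpace

theorem sum_sq_pow_two_pow_sub_half (t : ℝ) (m : ℕ) :
    ∑ j : Fin m, (t ^ 2 ^ (j.val + 1) - 1 / 2) ^ 2 = t ^ 2 ^ (m + 1) - t ^ 2 + m / 4 := by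
  induction m with
  | zero => simp
  | succ m ih =>
    rw [Fin.sum_univ_castSucc]
    simp only [Fin.val_castSucc, Fin.val_last, ih, pow_succ 2 (m + 1), pow_mul]
    push_cast
    ring

theorem l2alsh_identity_general (d m : ℕ) (U M : ℝ) (q x : EuclideanSpace ℝ (Fin d))
    (hq : ‖q‖ = 1) :
    ‖l2alshP m U M x - l2alshQ m q‖ ^ 2 =
      1 + (m : ℝ) / 4 - 2 * (U / M) * ⟪q, x⟫ + ‖(U / M) • x‖ ^ (2 ^ (m + 1)) := by
  set a := (U / M) • x
  calc ‖l2alshP m U M x - l2alshQ m q‖ ^ 2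
      = ‖a - q‖ ^ 2 + ∑ j : Fin m, (‖a‖ ^ 2 ^ (j.val + 1) - 1 / 2) ^ 2 := by
        rw [l2alshP, l2alshQ, ← map_sub, Fin.append_sub_append,
          EuclideanSpace.norm_sq_equiv_symm_append, ← map_sub,
          ContinuousLinearEquiv.symm_apply_apply, EuclideanSpace.real_norm_sq_eq (n := Fin m)]
        rfl
    _ = (‖a‖ ^ 2 - 2 * (U / M) * ⟪q, x⟫ + 1) + (‖a‖ ^ 2 ^ (m + 1) - ‖a‖ ^ 2 + m / 4) := by
        rw [norm_sub_sq_real, hq, sum_sq_pow_two_pow_sub_half, real_inner_smul_left,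
          real_inner_comm]
        ring
    _ = _ := by ring

theorem l2alsh_identity (d m : ℕ) (U M : ℝ) (q x : EuclideanSpace ℝ (Fin d))
    (hq : ‖q‖ = 1) (hM : 0 < M) (hU0 : 0 < U) (hU1 : U < 1)
    (hxn : ‖(U / M) • x‖ < 1) :
    ‖l2alshP m U M x - l2alshQ m q‖ ^ 2 =
      1 + (m : ℝ) / 4 - 2 * (U / M) * ⟪q, x⟫ + ‖(U / M) • x‖ ^ (2 ^ (m + 1)) :=
  l2alsh_identity_general d m U M q x hq
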